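/- Fix ε > 0, a point (u, v, w) ∈ ℝ × ℝⁿ × ℝ, and a nonzero z ∈ ℝⁿ. Define f(β) = dist((u,v,w), F^ε_β)² and d²(β) = f(β) + (√β − ‖z‖₂)² for β ≥ 0. Then d² attains its minimum over [0, ∞) at a unique point β* ≥ 0. -/

import Mathlib

/-- The Euler-like admissible set
`F^ε_β = {(ρ, m, E) : ρ ≥ ε and E − ‖m‖₂²/(2ρ) ≥ ε + β/2}`. -/
def Feps (n : ℕ) (ε β : ℝ) : Set (ℝ × EuclideanSpace ℝ (Fin n) × ℝ) :=
  {p | ε ≤ p.1 ∧ ε + β / 2 ≤ p.2.2 - ‖p.2.1‖ ^ 2 / (2 * p.1)}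

/-- The Euclidean distance from the point `(u, v, w) ∈ ℝ × ℝⁿ × ℝ` to a set `S`,
i.e. the infimum over `p ∈ S` of the Euclidean distance from `(u, v, w)` to `p`. -/
noncomputable def distTo (n : ℕ) (u : ℝ) (v : EuclideanSpace ℝ (Fin n)) (w : ℝ)
    (S : Set (ℝ × EuclideanSpace ℝ (Fin n) × ℝ)) : ℝ :=
  sInf ((fun p => Real.sqrt ((p.1 - u) ^ 2 + ‖p.2.1 - v‖ ^ 2 + (p.2.2 - w) ^ 2)) '' S)

set_option maxHeartbeats 1000000

open Metric Set

lemma feps_nonempty (n : ℕ) (ε β : ℝ) (hε : 0 < ε) : (Feps n ε β).Nonempty := by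
  refine ⟨(ε, 0, ε + β / 2), le_refl _, ?_⟩
  simp [hε.ne']

lemma feps_convex (n : ℕ) (ε β : ℝ) (hε : 0 < ε) : Convex ℝ (Feps n ε β) := by
  rintro ⟨ρ₁, m₁, E₁⟩ ⟨h₁, h₁'⟩ ⟨ρ₂, m₂, E₂⟩ ⟨h₂, h₂'⟩ a b ha hb hab
  dsimp only at h₁ h₁' h₂ h₂' ⊢
  have hρ₁ : 0 < ρ₁ := lt_of_lt_of_le hε h₁
  have hρ₂ : 0 < ρ₂ := lt_of_lt_of_le hε h₂
  have hs : (0:ℝ) ≤ ‖m₁‖ := norm_nonneg _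
  have ht : (0:ℝ) ≤ ‖m₂‖ := norm_nonneg _
  have hnorm : ‖a • m₁ + b • m₂‖ ≤ a * ‖m₁‖ + b * ‖m₂‖ := by
    calc ‖a • m₁ + b • m₂‖ ≤ ‖a • m₁‖ + ‖b • m₂‖ := norm_add_le _ _
    _ = a * ‖m₁‖ + b * ‖m₂‖ := by
        rw [norm_smul, norm_smul, Real.norm_of_nonneg ha, Real.norm_of_nonneg hb]
  have hnorm2 : ‖a • m₁ + b • m₂‖ ^ 2 ≤ (a * ‖m₁‖ + b * ‖m₂‖) ^ 2 := by
    have h0 := norm_nonneg (a • m₁ + b • m₂)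
    nlinarith
  set c : ℝ := ε + β / 2 with hc
  set s : ℝ := ‖m₁‖ with hsdef
  set t : ℝ := ‖m₂‖ with htdef
  clear_value c s t
  have hs2 : s ^ 2 ≤ 2 * ρ₁ * (E₁ - c) := by
    have h := (div_le_iff₀ (by positivity : (0:ℝ) < 2 * ρ₁)).1
      (by linarith : s ^ 2 / (2 * ρ₁) ≤ E₁ - c)
    linarith
  have ht2 : t ^ 2 ≤ 2 * ρ₂ * (E₂ - c) := by
    have h := (div_le_iff₀ (by positivity : (0:ℝ) < 2 * ρ₂)).1
      (by linarith : t ^ 2 / (2 * ρ₂) ≤ E₂ - c)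
    linarith
  have hA₁ : (0:ℝ) ≤ E₁ - c := by nlinarith
  have hA₂ : (0:ℝ) ≤ E₂ - c := by nlinarith
  have hcomb : ε ≤ a * ρ₁ + b * ρ₂ := by
    nlinarith [mul_le_mul_of_nonneg_left h₁ ha, mul_le_mul_of_nonneg_left h₂ hb]
  have hρ : (0:ℝ) < a * ρ₁ + b * ρ₂ := lt_of_lt_of_le hε hcomb
  constructor
  · show ε ≤ a • ρ₁ + b • ρ₂
    simpa [smul_eq_mul] using hcomb
  · show ε + β / 2 ≤ (a • E₁ + b • E₂) - ‖a • m₁ + b • m₂‖ ^ 2 / (2 * (a • ρ₁ + b • ρ₂))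
    rw [← hc]
    simp only [smul_eq_mul]
    have key2 : s * t * (2 * ρ₁ * ρ₂) ≤ (ρ₂ * (E₁ - c) + ρ₁ * (E₂ - c)) * (2 * ρ₁ * ρ₂) := by
      nlinarith [mul_le_mul_of_nonneg_left hs2 (sq_nonneg ρ₂),
        mul_le_mul_of_nonneg_left ht2 (sq_nonneg ρ₁), sq_nonneg (s * ρ₂ - t * ρ₁)]
    have key : s * t ≤ ρ₂ * (E₁ - c) + ρ₁ * (E₂ - c) :=
      le_of_mul_le_mul_right (by linarith) (by positivity : (0:ℝ) < 2 * ρ₁ * ρ₂)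
    have main : (a * s + b * t) ^ 2 ≤ 2 * (a * (E₁ - c) + b * (E₂ - c)) * (a * ρ₁ + b * ρ₂) := by
      have m1 := mul_le_mul_of_nonneg_left hs2 (sq_nonneg a)
      have m2 := mul_le_mul_of_nonneg_left ht2 (sq_nonneg b)
      have m3 := mul_le_mul_of_nonneg_left key (mul_nonneg ha hb)
      ring_nf at m1 m2 m3 ⊢
      nlinarith [m1, m2, m3]
    have hdiv : ‖a • m₁ + b • m₂‖ ^ 2 / (2 * (a * ρ₁ + b * ρ₂)) ≤ a * (E₁ - c) + b * (E₂ - c) := by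
      rw [div_le_iff₀ (by positivity)]
      nlinarith [hnorm2, main]
    have habc : a * c + b * c = c := by rw [← add_mul, hab, one_mul]
    have hexp : a * (E₁ - c) + b * (E₂ - c) = a * E₁ + b * E₂ - c := by
      rw [mul_sub, mul_sub]; linarith
    linarith [hdiv]

noncomputable def Phi (n : ℕ) (p : ℝ × EuclideanSpace ℝ (Fin n) × ℝ) :
    WithLp 2 (ℝ × WithLp 2 (EuclideanSpace ℝ (Fin n) × ℝ)) :=
  (WithLp.equiv 2 _).symm (p.1, (WithLp.equiv 2 _).symm (p.2.1, p.2.2))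

noncomputable def PhiL (n : ℕ) : (ℝ × EuclideanSpace ℝ (Fin n) × ℝ) →ₗ[ℝ]
    WithLp 2 (ℝ × WithLp 2 (EuclideanSpace ℝ (Fin n) × ℝ)) :=
  ⟨⟨Phi n, fun _ _ => rfl⟩, fun _ _ => rfl⟩

theorem Phi_dist (n : ℕ) (p q : ℝ × EuclideanSpace ℝ (Fin n) × ℝ) :
    dist (Phi n p) (Phi n q) =
      Real.sqrt ((p.1 - q.1) ^ 2 + ‖p.2.1 - q.2.1‖ ^ 2 + (p.2.2 - q.2.2) ^ 2) := by
  have h1 : (Phi n p).fst = p.1 := rfl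
  have h2 : (Phi n p).snd.fst = p.2.1 := rfl
  have h3 : (Phi n p).snd.snd = p.2.2 := rfl
  have k1 : (Phi n q).fst = q.1 := rfl
  have k2 : (Phi n q).snd.fst = q.2.1 := rfl
  have k3 : (Phi n q).snd.snd = q.2.2 := rfl
  rw [WithLp.prod_dist_eq_of_L2, WithLp.prod_dist_eq_of_L2, h1, h2, h3, k1, k2, k3,
    Real.dist_eq, Real.dist_eq, dist_eq_norm,
    Real.sq_sqrt (by positivity), sq_abs, sq_abs, add_assoc]

theorem distTo_eq (n : ℕ) (u : ℝ) (v : EuclideanSpace ℝ (Fin n)) (w : ℝ)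
    (S : Set (ℝ × EuclideanSpace ℝ (Fin n) × ℝ)) (hS : S.Nonempty) :
    distTo n u v w S = infDist (Phi n (u, v, w)) (Phi n '' S) := by
  unfold distTo
  have himg : (fun p : ℝ × EuclideanSpace ℝ (Fin n) × ℝ =>
        Real.sqrt ((p.1 - u) ^ 2 + ‖p.2.1 - v‖ ^ 2 + (p.2.2 - w) ^ 2)) '' S
      = (fun y => dist (Phi n (u, v, w)) y) '' (Phi n '' S) := by
    rw [Set.image_image]
    refine (Set.image_congr fun p _ => ?_).symm
    rw [dist_comm]
    exact Phi_dist n p (u, v, w)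
  rw [himg]
  apply le_antisymm
  · refine le_of_forall_pos_le_add fun δ hδ => ?_
    obtain ⟨y, hy, hlt⟩ := (infDist_lt_iff (hS.image _)).1
      (lt_add_of_pos_right (infDist (Phi n (u, v, w)) (Phi n '' S)) hδ)
    calc sInf ((fun y => dist (Phi n (u, v, w)) y) '' (Phi n '' S))
        ≤ dist (Phi n (u, v, w)) y := csInf_le
          ⟨0, by rintro b ⟨y', _, rfl⟩; exact dist_nonneg⟩ ⟨y, hy, rfl⟩
    _ ≤ _ := hlt.le
  · refine le_csInf ((hS.image _).image _) ?_
    rintro b ⟨y, hy, rfl⟩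
    exact infDist_le_dist_of_mem hy

theorem distTo_shift (n : ℕ) (ε : ℝ) (u : ℝ) (v : EuclideanSpace ℝ (Fin n)) (w β : ℝ) :
    distTo n u v w (Feps n ε β) = distTo n u v (w - β / 2) (Feps n ε 0) := by
  unfold distTo
  congr 1
  ext r
  constructor
  · rintro ⟨p, hp, rfl⟩
    refine ⟨(p.1, p.2.1, p.2.2 - β / 2), ⟨hp.1, ?_⟩, ?_⟩
    · have h := hp.2; dsimp only at h ⊢; linarith
    · dsimp only; congr 1; ring
  · rintro ⟨q, hq, rfl⟩
    refine ⟨(q.1, q.2.1, q.2.2 + β / 2), ⟨hq.1, ?_⟩, ?_⟩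
    · have h := hq.2; dsimp only at h ⊢; linarith
    · dsimp only; congr 1; ring

lemma convexOn_infDist' {V : Type*} [NormedAddCommGroup V] [NormedSpace ℝ V] {T : Set V}
    (hT : T.Nonempty) (hTc : Convex ℝ T) :
    ConvexOn ℝ univ fun x => infDist x T := by
  refine ⟨convex_univ, fun x _ y _ a b ha hb hab => ?_⟩
  refine le_of_forall_pos_le_add fun δ hδ => ?_
  obtain ⟨p, hp, hxp⟩ := (infDist_lt_iff hT).1 (lt_add_of_pos_right (infDist x T) (half_pos hδ))
  obtain ⟨q, hq, hyq⟩ := (infDist_lt_iff hT).1 (lt_add_of_pos_right (infDist y T) (half_pos hδ))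
  have hmem : a • p + b • q ∈ T := hTc hp hq ha hb hab
  have h1 : infDist (a • x + b • y) T ≤ dist (a • x + b • y) (a • p + b • q) :=
    infDist_le_dist_of_mem hmem
  have hd : dist (a • x + b • y) (a • p + b • q) ≤ a * dist x p + b * dist y q := by
    calc dist (a • x + b • y) (a • p + b • q) = ‖a • (x - p) + b • (y - q)‖ := by
          rw [dist_eq_norm]; congr 1; module
    _ ≤ ‖a • (x - p)‖ + ‖b • (y - q)‖ := norm_add_le _ _
    _ = a * ‖x - p‖ + b * ‖y - q‖ := by
          rw [norm_smul, norm_smul, Real.norm_of_nonneg ha, Real.norm_of_nonneg hb]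
    _ = a * dist x p + b * dist y q := by rw [dist_eq_norm, dist_eq_norm]
  have h2 : a * dist x p ≤ a * (infDist x T + δ / 2) := mul_le_mul_of_nonneg_left hxp.le ha
  have h3 : b * dist y q ≤ b * (infDist y T + δ / 2) := mul_le_mul_of_nonneg_left hyq.le hb
  simp only [smul_eq_mul]
  nlinarith


/-- `d²(β) = dist((u,v,w), F^ε_β)² + (√β − ‖z‖₂)²` attains its minimum
over `[0, ∞)` at a unique point `β* ≥ 0`. -/
theorem d2_unique_minimizer (n : ℕ) (hn : 0 < n) (ε : ℝ) (hε : 0 < ε)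
    (u : ℝ) (v : EuclideanSpace ℝ (Fin n)) (w : ℝ)
    (z : EuclideanSpace ℝ (Fin n)) (hz : z ≠ 0) :
    ∃! βstar : ℝ, βstar ∈ Set.Ici (0 : ℝ) ∧
      ∀ β ∈ Set.Ici (0 : ℝ),
        distTo n u v w (Feps n ε βstar) ^ 2 + (Real.sqrt βstar - ‖z‖) ^ 2 ≤
        distTo n u v w (Feps n ε β) ^ 2 + (Real.sqrt β - ‖z‖) ^ 2 := by
  have hZ : (0:ℝ) < ‖z‖ := norm_pos_iff.mpr hz
  set T : Set (WithLp 2 (ℝ × WithLp 2 (EuclideanSpace ℝ (Fin n) × ℝ))) :=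
    Phi n '' Feps n ε 0 with hT
  have hTne : T.Nonempty := (feps_nonempty n ε 0 hε).image _
  have hTc : Convex ℝ T := (feps_convex n ε 0 hε).linear_image (PhiL n)
  have hF : ConvexOn ℝ univ (fun x => infDist x T) := convexOn_infDist' hTne hTc
  set g : ℝ → ℝ := fun β => infDist (Phi n (u, v, w - β / 2)) T with hg
  have hfg : ∀ β : ℝ, distTo n u v w (Feps n ε β) = g β := by
    intro β
    rw [distTo_shift, distTo_eq n u v (w - β / 2) _ (feps_nonempty n ε 0 hε)]
  -- affine path identity
  have hpt : ∀ a b x y : ℝ, a + b = 1 →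
      Phi n (u, v, w - (a * x + b * y) / 2) =
        a • Phi n (u, v, w - x / 2) + b • Phi n (u, v, w - y / 2) := by
    intro a b x y hab
    have h3 : (u, v, w - (a * x + b * y) / 2) =
        a • ((u, v, w - x / 2) : ℝ × EuclideanSpace ℝ (Fin n) × ℝ) + b • (u, v, w - y / 2) := by
      have hb' : b = 1 - a := by linarith
      subst hb'
      simp only [Prod.smul_mk, Prod.mk_add_mk, Prod.mk.injEq, smul_eq_mul]
      refine ⟨by ring, ?_, by ring⟩
      rw [← add_smul]
      rw [show a + (1 - a) = 1 by ring, one_smul]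
    rw [h3]; rfl
  have hgconv : ConvexOn ℝ univ g := by
    refine ⟨convex_univ, fun x _ y _ a b ha hb hab => ?_⟩
    have h3 := hpt a b x y hab
    simp only [hg, smul_eq_mul]
    rw [h3]
    exact hF.2 (mem_univ _) (mem_univ _) ha hb hab
  have hgnonneg : ∀ x : ℝ, 0 ≤ g x := fun x => infDist_nonneg
  -- continuity of g
  have hpath : ∀ β : ℝ, Phi n (u, v, w - β / 2) =
      Phi n (u, v, w) - (β / 2) • Phi n (0, 0, 1) := by
    intro β
    have h4 : (u, v, w - β / 2) = ((u, v, w) : ℝ × EuclideanSpace ℝ (Fin n) × ℝ) -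
        (β / 2) • ((0, 0, 1) : ℝ × EuclideanSpace ℝ (Fin n) × ℝ) := by
      simp only [Prod.smul_mk, Prod.mk_sub_mk, smul_eq_mul, mul_zero, sub_zero, smul_zero,
        mul_one]
    rw [h4]; rfl
  have hgcont : Continuous g := by
    have h1 : Continuous fun β : ℝ => Phi n (u, v, w) - (β / 2) • Phi n (0, 0, 1) := by
      fun_prop
    have h2 := (continuous_infDist_pt T).comp h1
    exact h2.congr fun β => by simp only [Function.comp_apply, hg]; rw [hpath β]
  set E : ℝ → ℝ := fun β => (g β ^ 2 + (β + ‖z‖ ^ 2)) + -(2 * ‖z‖ * Real.sqrt β) with hE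
  have hsqsub : ∀ β : ℝ, 0 ≤ β → (Real.sqrt β - ‖z‖) ^ 2 = β - 2 * ‖z‖ * Real.sqrt β + ‖z‖ ^ 2 := by
    intro β hβ
    rw [sub_sq, Real.sq_sqrt hβ]; ring
  have hDE : ∀ β ∈ Ici (0:ℝ),
      distTo n u v w (Feps n ε β) ^ 2 + (Real.sqrt β - ‖z‖) ^ 2 = E β := by
    intro β hβ
    rw [hfg β, hsqsub β hβ, hE]; ring
  -- strict convexity of E on Ici 0
  have h1 : ConvexOn ℝ (Ici (0:ℝ)) fun β => g β ^ 2 := by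
    have := (hgconv.subset (subset_univ _) (convex_Ici 0)).pow (fun x _ => hgnonneg x) 2
    exact this
  have h2 : ConvexOn ℝ (Ici (0:ℝ)) fun β : ℝ => β + ‖z‖ ^ 2 :=
    (convexOn_id (convex_Ici 0)).add (convexOn_const _ (convex_Ici 0))
  have h3 : StrictConvexOn ℝ (Ici (0:ℝ)) fun β : ℝ => -(2 * ‖z‖ * Real.sqrt β) := by
    refine ⟨convex_Ici 0, fun x hx y hy hxy a b ha hb hab => ?_⟩
    have hsq := Real.strictConcaveOn_sqrt.2 hx hy hxy ha hb hab
    simp only [smul_eq_mul] at hsq ⊢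
    nlinarith [mul_lt_mul_of_pos_left hsq (by positivity : (0:ℝ) < 2 * ‖z‖)]
  have hEstrict : StrictConvexOn ℝ (Ici (0:ℝ)) E := (h1.add h2).add_strictConvexOn h3
  have hEcont : Continuous E := by
    exact ((hgcont.pow 2).add (continuous_id.add continuous_const)).add
      ((continuous_const.mul Real.continuous_sqrt)).neg
  -- E 0 nonneg
  have hE0 : 0 ≤ E 0 := by
    have : E 0 = g 0 ^ 2 + ‖z‖ ^ 2 := by simp [hE]
    rw [this]; positivity
  set B : ℝ := (‖z‖ + Real.sqrt (E 0)) ^ 2 with hB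
  have hBnn : 0 ≤ B := sq_nonneg _
  obtain ⟨βs, hβs, hmin⟩ := (isCompact_Icc (a := (0:ℝ)) (b := B + 1)).exists_isMinOn
    ⟨0, le_refl 0, by linarith⟩ hEcont.continuousOn
  have hβs0 : βs ∈ Ici (0:ℝ) := hβs.1
  have hglobal : ∀ β ∈ Ici (0:ℝ), E βs ≤ E β := by
    intro β hβ
    by_cases hle : β ≤ B + 1
    · exact isMinOn_iff.mp hmin β ⟨hβ, hle⟩
    · push_neg at hle
      have hEs0 : E βs ≤ E 0 := isMinOn_iff.mp hmin 0 ⟨le_refl 0, by linarith⟩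
      have hsβ : Real.sqrt B < Real.sqrt β := Real.sqrt_lt_sqrt hBnn (by linarith)
      have hsB : Real.sqrt B = ‖z‖ + Real.sqrt (E 0) := Real.sqrt_sq (by positivity)
      have hlt1 : Real.sqrt (E 0) < Real.sqrt β - ‖z‖ := by rw [hsB] at hsβ; linarith
      have hlt2 : E 0 < (Real.sqrt β - ‖z‖) ^ 2 := by
        nlinarith [Real.sqrt_nonneg (E 0), Real.sq_sqrt hE0]
      have hβ0 : (0:ℝ) ≤ β := hβ
      have hlt3 : (Real.sqrt β - ‖z‖) ^ 2 ≤ E β := by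
        have hgb := sq_nonneg (g β)
        have hexp := hsqsub β hβ0
        rw [hE]
        simp only
        nlinarith
      linarith
  refine ⟨βs, ⟨hβs0, fun β hβ => ?_⟩, ?_⟩
  · rw [hDE βs hβs0, hDE β hβ]
    exact hglobal β hβ
  · rintro y ⟨hy0, hymin⟩
    have hyMin : IsMinOn E (Ici (0:ℝ)) y := by
      refine isMinOn_iff.mpr fun β hβ => ?_
      rw [← hDE y hy0, ← hDE β hβ]
      exact hymin β hβ
    have hsMin : IsMinOn E (Ici (0:ℝ)) βs := isMinOn_iff.mpr hglobal
    exact hEstrict.eq_of_isMinOn hyMin hsMin hy0 hβs0
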